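/- arXiv:2402.09265 — 5 statements merged into one kernel-verified Lean document; each statement's English description precedes it below -/
import Mathlib

section
/- Let ≼ be an inclusion-monotone preorder on Finset α. Then every ≼-preferred repair of a finite set G (with respect to any consistency predicate C) is a subset repair of G, i.e., an inclusion-maximal consistent subset of G. -/
/-- The strict part of a preference relation on finite databases. -/
def strictPart {α : Type*} [DecidableEq α] (r : Finset α → Finset α → Prop)
    (H H' : Finset α) : Prop :=
  r H H' ∧ ¬ r H' H

/-- `H` is a `r`-preferred repair of `G` with respect to consistency predicate `C`. -/
def PreferredRepair {α : Type*} [DecidableEq α] (r : Finset α → Finset α → Prop)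
    (C : Finset α → Prop) (G H : Finset α) : Prop :=
  C H ∧ H ⊆ G ∧ ¬ ∃ H'', H'' ⊆ G ∧ H'' ≠ H ∧ C H'' ∧ strictPart r H H''

/-- `H` is a subset repair of `G`: an inclusion-maximal consistent subset of `G`. -/
def SubsetRepair {α : Type*} [DecidableEq α] (C : Finset α → Prop)
    (G H : Finset α) : Prop :=
  C H ∧ H ⊆ G ∧ ¬ ∃ H'', C H'' ∧ H ⊂ H'' ∧ H'' ⊆ G

/-- A relation on finite sets is inclusion-monotone if strict inclusion implies
strict preference. -/
def InclMonotone {α : Type*} [DecidableEq α] (r : Finset α → Finset α → Prop) : Prop :=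
  ∀ H H' : Finset α, H ⊂ H' → strictPart r H H'

theorem strictPart_irrefl {α : Type*} [DecidableEq α] (r : Finset α → Finset α → Prop)
    (H : Finset α) : ¬ strictPart r H H :=
  fun h => h.2 h.1

/-- Since the strict part is irreflexive, the side condition `H'' ≠ H` in `PreferredRepair`
is automatic. -/
theorem PreferredRepair.not_strictPart {α : Type*} [DecidableEq α]
    {r : Finset α → Finset α → Prop} {C : Finset α → Prop} {G H H' : Finset α}
    (h : PreferredRepair r C G H) (hH'G : H' ⊆ G) (hC : C H') : ¬ strictPart r H H' := by
  intro hlt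
  have hne : H' ≠ H := by
    rintro rfl
    exact strictPart_irrefl r H' hlt
  exact h.2.2 ⟨H', hH'G, hne, hC, hlt⟩

theorem preferred_repair_is_subset_repair_general
    {α : Type*} [DecidableEq α] (r : Finset α → Finset α → Prop)
    (hmono : InclMonotone r)
    (C : Finset α → Prop) (G H : Finset α)
    (h : PreferredRepair r C G H) :
    SubsetRepair C G H := by
  refine ⟨h.1, h.2.1, ?_⟩
  rintro ⟨H'', hC'', hHH'', hH''G⟩
  exact h.not_strictPart hH''G hC'' (hmono H H'' hHH'')

theorem preferred_repair_is_subset_repair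
    {α : Type*} [DecidableEq α] (r : Finset α → Finset α → Prop)
    (hrefl : ∀ H, r H H)
    (htrans : ∀ H₁ H₂ H₃, r H₁ H₂ → r H₂ H₃ → r H₁ H₃)
    (hmono : InclMonotone r)
    (C : Finset α → Prop) (G H : Finset α)
    (h : PreferredRepair r C G H) :
    SubsetRepair C G H :=
  preferred_repair_is_subset_repair_general r hmono C G H h
end

section
/- Let A be a partially ordered type and ℓ : α → A a labeling. If H ⊊ H' (finite sets over α), then H ≺_M H', i.e., H^M ≤_mset H'^M and ¬(H'^M ≤_mset H^M). Consequently, every ≼_M-preferred repair of a finite set G (with respect to any consistency predicate C) is an inclusion-maximal consistent subset of G. -/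
/-- The Dershowitz–Manna style multiset ordering induced by a partial order on `A`. -/
def MsetLe {A : Type*} [PartialOrder A] [DecidableEq A] (M₁ M₂ : Multiset A) : Prop :=
  M₁ = M₂ ∨ (M₁ ≠ M₂ ∧
    ∀ x, M₂.count x < M₁.count x → ∃ y, x < y ∧ M₁.count y < M₂.count y)

/-- The multiset of labels of a finite set of facts (multiplicities counted). -/
def msetOf {α : Type*} [DecidableEq α] {A : Type*} (l : α → A) (H : Finset α) :
    Multiset A :=
  H.val.map l

theorem multiset_preference_inclusion_monotone_and_repairs
    {α : Type*} [DecidableEq α] {A : Type*} [PartialOrder A] [DecidableEq A]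
    (l : α → A) :
    (∀ H H' : Finset α, H ⊂ H' →
        MsetLe (msetOf l H) (msetOf l H') ∧ ¬ MsetLe (msetOf l H') (msetOf l H)) ∧
    (∀ (C : Finset α → Prop) (G H : Finset α),
        PreferredRepair (fun X Y => MsetLe (msetOf l X) (msetOf l Y)) C G H →
          SubsetRepair C G H) := by
  have key : ∀ H H' : Finset α, H ⊂ H' →
      MsetLe (msetOf l H) (msetOf l H') ∧ ¬ MsetLe (msetOf l H') (msetOf l H) := by
    intro H H' hss
    have hle : msetOf l H ≤ msetOf l H' :=
      Multiset.map_le_map (Finset.val_le_iff.mpr hss.subset)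
    have hcount : ∀ x, (msetOf l H).count x ≤ (msetOf l H').count x :=
      fun x => Multiset.count_le_of_le x hle
    have hne : msetOf l H ≠ msetOf l H' := by
      intro h
      have : H.card = H'.card := by
        have := congrArg Multiset.card h
        simpa [msetOf] using this
      exact absurd (Finset.eq_of_subset_of_card_le hss.subset this.ge) hss.ne
    constructor
    · exact Or.inr ⟨hne, fun x hx => absurd (hcount x) (not_le.mpr hx)⟩
    · rintro (h | ⟨-, h⟩)
      · exact hne h.symm
      · have hx : ∃ x, (msetOf l H).count x < (msetOf l H').count x := by
          by_contra hc
          push_neg at hc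
          exact hne (Multiset.ext.mpr fun x => le_antisymm (hcount x) (hc x))
        obtain ⟨x, hx⟩ := hx
        obtain ⟨y, -, hy⟩ := h x hx
        exact absurd (hcount y) (not_le.mpr hy)
  refine ⟨key, ?_⟩
  rintro C G H ⟨hC, hsub, hno⟩
  refine ⟨hC, hsub, ?_⟩
  rintro ⟨H'', hC'', hss, hsubG⟩
  exact hno ⟨H'', hsubG, (hss.ne).symm, hC'', key H H'' hss⟩
end

section
/- Let ≼ be an inclusion-monotone preorder on Finset α and let C be a consistency predicate with C ∅. Then every finite set G : Finset α has at least one ≼-preferred repair with respect to C. -/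
theorem preferred_repair_exists
    {α : Type*} [DecidableEq α] (r : Finset α → Finset α → Prop)
    (hrefl : ∀ H, r H H)
    (htrans : ∀ H₁ H₂ H₃, r H₁ H₂ → r H₂ H₃ → r H₁ H₃)
    (hmono : InclMonotone r)
    (C : Finset α → Prop) (hC : C ∅) (G : Finset α) :
    ∃ H, PreferredRepair r C G H := by
  classical
  set S : Set (Finset α) := {H | H ⊆ G ∧ C H} with hS
  have hSfin : S.Finite := by
    apply Set.Finite.subset (G.powerset : Finset (Finset α)).finite_toSet
    intro H hH
    simp only [Finset.coe_powerset, Set.mem_preimage, Set.mem_powerset_iff]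
    exact_mod_cast hH.1
  -- the flipped strict part is transitive and irreflexive, hence well-founded on S
  have htrans' : Transitive (fun a b => strictPart r b a) := by
    intro a b c hab hbc
    exact ⟨htrans _ _ _ hbc.1 hab.1, fun h => hab.2 (htrans _ _ _ h hbc.1)⟩
  have hwf : S.WellFoundedOn (fun a b => strictPart r b a) := by
    haveI : IsTrans (Finset α) (fun a b => strictPart r b a) := ⟨htrans'⟩
    haveI : IsIrrefl (Finset α) (fun a b => strictPart r b a) :=
      ⟨fun a h => h.2 h.1⟩
    haveI : IsStrictOrder (Finset α) (fun a b => strictPart r b a) := ⟨⟩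
    exact hSfin.wellFoundedOn
  have hne : (∅ : Finset α) ∈ S := ⟨Finset.empty_subset G, hC⟩
  obtain ⟨⟨H, hHS⟩, -, hmin⟩ :=
    hwf.has_min Set.univ ⟨⟨∅, hne⟩, Set.mem_univ _⟩
  refine ⟨H, hHS.2, hHS.1, ?_⟩
  rintro ⟨H'', hsub, -, hC'', hstrict⟩
  exact hmin ⟨H'', ⟨hsub, hC''⟩⟩ (Set.mem_univ _) hstrict
end

section
/- Let ≼ be an inclusion-monotone preorder on Finset α and let C be a consistency predicate with C ∅. Then for every finite G : Finset α: G has a nonempty subset repair (inclusion-maximal consistent subset) if and only if G has a nonempty ≼-preferred repair. -/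
theorem Set.Finite.exists_maximal_of_isStrictOrder {β : Type*} (s : β → β → Prop)
    [IsStrictOrder β s] {t : Set β} (ht : t.Finite) (hne : t.Nonempty) :
    ∃ m ∈ t, ∀ x ∈ t, ¬ s m x := by
  obtain ⟨x, hx⟩ := hne
  obtain ⟨⟨m, hm⟩, -, hmin⟩ :=
    (ht.wellFoundedOn (r := Function.swap s)).has_min Set.univ ⟨⟨x, hx⟩, trivial⟩
  exact ⟨m, hm, fun y hy => hmin ⟨y, hy⟩ trivial⟩

section Repairs

variable {α : Type*} [DecidableEq α] {r : Finset α → Finset α → Prop}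
  {C : Finset α → Prop} {G H : Finset α}

theorem isStrictOrder_strictPart
    (htrans : ∀ H₁ H₂ H₃, r H₁ H₂ → r H₂ H₃ → r H₁ H₃) :
    IsStrictOrder (Finset α) (strictPart r) where
  irrefl _ h := h.2 h.1
  trans _ _ _ hab hbc := ⟨htrans _ _ _ hab.1 hbc.1, fun hca => hbc.2 (htrans _ _ _ hca hab.1)⟩

theorem exists_preferredRepair_not_strictPart
    (htrans : ∀ H₁ H₂ H₃, r H₁ H₂ → r H₂ H₃ → r H₁ H₃) (hCH : C H) (hHG : H ⊆ G) :
    ∃ M, PreferredRepair r C G M ∧ ¬ strictPart r M H := by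
  have := isStrictOrder_strictPart htrans
  have hfin : {K : Finset α | K ⊆ G ∧ C K}.Finite :=
    G.powerset.finite_toSet.subset fun K hK => Finset.mem_powerset.2 hK.1
  obtain ⟨M, ⟨hMG, hCM⟩, hmax⟩ :=
    hfin.exists_maximal_of_isStrictOrder (strictPart r) ⟨H, hHG, hCH⟩
  exact ⟨M, ⟨hCM, hMG, fun ⟨K, hKG, _, hCK, hMK⟩ => hmax K ⟨hKG, hCK⟩ hMK⟩,
    hmax H ⟨hHG, hCH⟩⟩

theorem PreferredRepair.subsetRepair (hmono : InclMonotone r) (h : PreferredRepair r C G H) :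
    SubsetRepair C G H :=
  ⟨h.1, h.2.1, fun ⟨K, hCK, hHK, hKG⟩ => h.2.2 ⟨K, hKG, hHK.ne', hCK, hmono H K hHK⟩⟩

end Repairs

theorem nonempty_subset_repair_iff_nonempty_preferred_repair_general
    {α : Type*} [DecidableEq α] (r : Finset α → Finset α → Prop)
    (htrans : ∀ H₁ H₂ H₃, r H₁ H₂ → r H₂ H₃ → r H₁ H₃)
    (hmono : InclMonotone r)
    (C : Finset α → Prop) (G : Finset α) :
    (∃ H, SubsetRepair C G H ∧ H ≠ ∅) ↔ (∃ H, PreferredRepair r C G H ∧ H ≠ ∅) := by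
  constructor
  · rintro ⟨H, ⟨hCH, hHG, -⟩, hH⟩
    obtain ⟨M, hM, hMH⟩ := exists_preferredRepair_not_strictPart htrans hCH hHG
    refine ⟨M, hM, ?_⟩
    rintro rfl
    exact hMH (hmono ∅ H (Finset.empty_ssubset.2 (Finset.nonempty_iff_ne_empty.2 hH)))
  · rintro ⟨H, hH, hne⟩
    exact ⟨H, hH.subsetRepair hmono, hne⟩

theorem nonempty_subset_repair_iff_nonempty_preferred_repair
    {α : Type*} [DecidableEq α] (r : Finset α → Finset α → Prop)
    (hrefl : ∀ H, r H H)
    (htrans : ∀ H₁ H₂ H₃, r H₁ H₂ → r H₂ H₃ → r H₁ H₃)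
    (hmono : InclMonotone r)
    (C : Finset α → Prop) (hC : C ∅) (G : Finset α) :
    (∃ H, SubsetRepair C G H ∧ H ≠ ∅) ↔ (∃ H, PreferredRepair r C G H ∧ H ≠ ∅) :=
  nonempty_subset_repair_iff_nonempty_preferred_repair_general r htrans hmono C G
end

section
/- Let ≼ be an inclusion-monotone preorder on Finset α and let C be a consistency predicate with C ∅. If a finite set G : Finset α has a unique subset repair H (a unique inclusion-maximal consistent subset of G), then H is also the unique ≼-preferred repair of G. -/
/-! Every consistent subset of `G` extends to a subset repair, so the unique subset repair `H`
contains all of them. Hence every other consistent subset of `G` is strictly contained in `H`,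
so an inclusion-monotone preference strictly prefers `H` to it: nothing beats `H`, and nothing
else survives comparison with `H`. -/

section Repairs

variable {α : Type*} [DecidableEq α] {C : Finset α → Prop} {G H : Finset α}

theorem subsetRepair_iff_maximal :
    SubsetRepair C G H ↔ Maximal (fun Y => C Y ∧ Y ⊆ G) H := by
  refine ⟨fun ⟨hC, hG, hmax⟩ => ⟨⟨hC, hG⟩, fun Y hY hHY => ?_⟩,
    fun hmax => ⟨hmax.prop.1, hmax.prop.2, ?_⟩⟩
  · by_contra hYH
    exact hmax ⟨Y, hY.1, ⟨hHY, hYH⟩, hY.2⟩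
  · rintro ⟨Y, hY, hHY, hYG⟩
    exact hHY.not_subset (hmax.le_of_ge ⟨hY, hYG⟩ hHY.subset)

theorem exists_subsetRepair_superset {X : Finset α} (hX : C X) (hXG : X ⊆ G) :
    ∃ M, SubsetRepair C G M ∧ X ⊆ M := by
  have hfin : {Y : Finset α | C Y ∧ Y ⊆ G}.Finite :=
    G.powerset.finite_toSet.subset fun Y hY => Finset.mem_powerset.2 hY.2
  obtain ⟨M, hXM, hM⟩ := hfin.exists_le_maximal (show C X ∧ X ⊆ G from ⟨hX, hXG⟩)
  exact ⟨M, subsetRepair_iff_maximal.2 hM, hXM⟩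

theorem subset_of_forall_subsetRepair_eq (huniq : ∀ H', SubsetRepair C G H' → H' = H)
    {X : Finset α} (hX : C X) (hXG : X ⊆ G) : X ⊆ H := by
  obtain ⟨M, hM, hXM⟩ := exists_subsetRepair_superset hX hXG
  exact huniq M hM ▸ hXM

variable {r : Finset α → Finset α → Prop}

theorem preferredRepair_of_forall_subset (hmono : InclMonotone r) (hC : C H) (hHG : H ⊆ G)
    (hgreatest : ∀ X, C X → X ⊆ G → X ⊆ H) : PreferredRepair r C G H := by
  refine ⟨hC, hHG, ?_⟩
  rintro ⟨X, hXG, hXH, hX, _, hnot⟩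
  exact hnot (hmono X H ((hgreatest X hX hXG).ssubset_of_ne hXH)).1

theorem PreferredRepair.eq_of_forall_subset (hmono : InclMonotone r) {X : Finset α}
    (hX : PreferredRepair r C G X) (hC : C H) (hHG : H ⊆ G)
    (hgreatest : ∀ Y, C Y → Y ⊆ G → Y ⊆ H) : X = H := by
  by_contra hXH
  have hlt : X ⊂ H := (hgreatest X hX.1 hX.2.1).ssubset_of_ne hXH
  exact hX.2.2 ⟨H, hHG, hlt.ne', hC, hmono X H hlt⟩

end Repairs

theorem unique_subset_repair_is_unique_preferred_repair_general
    {α : Type*} [DecidableEq α] (r : Finset α → Finset α → Prop)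
    (hmono : InclMonotone r)
    (C : Finset α → Prop) (G H : Finset α)
    (hH : SubsetRepair C G H)
    (huniq : ∀ H', SubsetRepair C G H' → H' = H) :
    PreferredRepair r C G H ∧ ∀ H', PreferredRepair r C G H' → H' = H := by
  have hgreatest : ∀ X, C X → X ⊆ G → X ⊆ H := fun _ hX hXG =>
    subset_of_forall_subsetRepair_eq huniq hX hXG
  exact ⟨preferredRepair_of_forall_subset hmono hH.1 hH.2.1 hgreatest,
    fun _ hX => hX.eq_of_forall_subset hmono hH.1 hH.2.1 hgreatest⟩

theorem unique_subset_repair_is_unique_preferred_repair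
    {α : Type*} [DecidableEq α] (r : Finset α → Finset α → Prop)
    (hrefl : ∀ H, r H H)
    (htrans : ∀ H₁ H₂ H₃, r H₁ H₂ → r H₂ H₃ → r H₁ H₃)
    (hmono : InclMonotone r)
    (C : Finset α → Prop) (hC : C ∅) (G H : Finset α)
    (hH : SubsetRepair C G H)
    (huniq : ∀ H', SubsetRepair C G H' → H' = H) :
    PreferredRepair r C G H ∧ ∀ H', PreferredRepair r C G H' → H' = H :=
  unique_subset_repair_is_unique_preferred_repair_general r hmono C G H hH huniq
end
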